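/- arXiv:1706.00042 — 7 statements merged into one kernel-verified Lean document; each statement's English description precedes it below -/
import Mathlib

section
/- Let G be an abelian group and let A be a finite subset of G \ {0} with |A| ≤ 5 such that A contains no 2-subset of the form {x, -x} and the sum of all elements of A is 0. Then there exists an ordering of the elements of A whose partial sums are pairwise distinct. -/
theorem stmt_1 {G : Type*} [AddCommGroup G] [DecidableEq G] (A : Finset G)
    (h0 : (0 : G) ∉ A)
    (hpair : ∀ x ∈ A, -x ∈ A → x = -x)
    (hsum : ∑ a ∈ A, a = 0)
    (hcard : A.card ≤ 5) :
    ∃ l : List G, l.Nodup ∧ l.toFinset = A ∧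
      ∀ i j : Fin l.length,
        (l.take (i.1 + 1)).sum = (l.take (j.1 + 1)).sum → i = j := by
  classical
  have small : ∀ S : Finset G, S ⊆ A → S.Nonempty → S.card ≤ 2 → ∑ a ∈ S, a ≠ 0 := by
    intro S hS hne hc h
    have h1 : 1 ≤ S.card := Finset.one_le_card.mpr hne
    have : S.card = 1 ∨ S.card = 2 := by omega
    rcases this with hc1 | hc2
    · obtain ⟨x, hx⟩ := Finset.card_eq_one.mp hc1
      subst hx
      simp at h
      exact h0 (h ▸ hS (Finset.mem_singleton_self x))
    · obtain ⟨x, y, hxy, hx⟩ := Finset.card_eq_two.mp hc2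
      subst hx
      rw [Finset.sum_pair hxy] at h
      have hy : y = -x := eq_neg_of_add_eq_zero_right h
      have hxA : x ∈ A := hS (by simp)
      have hyA : -x ∈ A := hy ▸ hS (by simp)
      exact hxy (by rw [hy]; exact (hpair x hxA hyA))
  have proper : ∀ S : Finset G, S ⊆ A → S.Nonempty → S ≠ A → ∑ a ∈ S, a ≠ 0 := by
    intro S hS hne hneA h
    by_cases hc : S.card ≤ 2
    · exact small S hS hne hc h
    · have hle : S.card ≤ A.card := Finset.card_le_card hS
      have hdc : (A \ S).card ≤ 2 := by
        rw [Finset.card_sdiff_of_subset hS]; omega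
      have hdne : (A \ S).Nonempty := by
        rw [Finset.sdiff_nonempty]
        intro hAS
        exact hneA (Finset.Subset.antisymm hS hAS)
      have hdsum : ∑ a ∈ A \ S, a = 0 := by
        have := Finset.sum_sdiff (f := fun a => a) hS
        rw [hsum, h, add_zero] at this
        exact this
      exact small _ Finset.sdiff_subset hdne hdc hdsum
  refine ⟨A.toList, A.nodup_toList, A.toList_toFinset, ?_⟩
  have key : ∀ i j : Fin A.toList.length, i.1 < j.1 →
      (A.toList.take (i.1 + 1)).sum ≠ (A.toList.take (j.1 + 1)).sum := by
    intro i j hlt h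
    have hjlen : j.1 < A.toList.length := j.2
    have hsplit : A.toList.take (j.1 + 1) = A.toList.take (i.1 + 1) ++ (A.toList.drop (i.1 + 1)).take (j.1 - i.1) := by
      rw [← List.take_add]; congr 1; omega
    set seg := (A.toList.drop (i.1 + 1)).take (j.1 - i.1) with hsegdef
    have hsegsum : seg.sum = 0 := by
      rw [hsplit, List.sum_append] at h
      exact (left_eq_add.mp h)
    have hsub : seg.Sublist A.toList := (List.take_sublist _ _).trans (List.drop_sublist _ _)
    have hnd : seg.Nodup := hsub.nodup A.nodup_toList
    have hsubset : seg.toFinset ⊆ A := by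
      intro x hx
      rw [← A.toList_toFinset]
      exact List.mem_toFinset.mpr (hsub.subset (List.mem_toFinset.mp hx))
    have hlen : seg.length = j.1 - i.1 := by
      rw [List.length_take, List.length_drop]; omega
    have hpos : 0 < seg.length := by omega
    have hnonempty : seg.toFinset.Nonempty := by
      obtain ⟨x, hx⟩ := List.exists_mem_of_length_pos hpos
      exact ⟨x, List.mem_toFinset.mpr hx⟩
    have hcardA : A.toList.length = A.card := A.length_toList
    have hcardseg : seg.toFinset.card = seg.length := List.toFinset_card_of_nodup hnd
    have hneq : seg.toFinset ≠ A := by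
      intro hEq
      have : seg.toFinset.card = A.card := by rw [hEq]
      omega
    have hsumeq : ∑ a ∈ seg.toFinset, a = seg.sum := by
      rw [List.sum_toFinset _ hnd]; simp
    exact proper seg.toFinset hsubset hnonempty hneq (hsumeq.trans hsegsum)
  intro i j hij
  rcases lt_trichotomy i.1 j.1 with h | h | h
  · exact absurd hij (key i j h)
  · exact Fin.ext h
  · exact absurd hij.symm (key j i h)
end

section
/- Let G be an abelian group and let A be a finite subset of G \ {0} with |A| = 6 such that A contains no 2-subset {x, -x} and the sum of all elements of A is 0. Then there exists an ordering of the elements of A whose partial sums are pairwise distinct. -/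
section Aux

variable {G : Type*} [AddCommGroup G]

private lemma exists_six (l : List G) (h : l.length = 6) :
    ∃ a b c d e f : G, l = [a, b, c, d, e, f] := by
  match l, h with
  | [a, b, c, d, e, f], _ => exact ⟨a, b, c, d, e, f, rfl⟩

set_option maxHeartbeats 2000000 in
/-- Key lemma: for an explicit 6-element list, the distinct-partial-sums condition follows
from nonvanishing of certain interval sums. -/
private lemma sumKey (a b c d e f : G) (hs : a + b + c + d + e + f = 0)
    (h1 : a ≠ 0) (h2 : b ≠ 0) (h3 : c ≠ 0) (h4 : d ≠ 0) (h5 : e ≠ 0) (h6 : f ≠ 0)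
    (p1 : a + b ≠ 0) (p2 : b + c ≠ 0) (p3 : c + d ≠ 0) (p4 : d + e ≠ 0) (p5 : e + f ≠ 0)
    (p6 : f + a ≠ 0)
    (t1 : a + b + c ≠ 0) (t2 : b + c + d ≠ 0) (t3 : c + d + e ≠ 0) :
    ∀ i j : Fin ([a, b, c, d, e, f] : List G).length,
      (([a, b, c, d, e, f] : List G).take (i.1 + 1)).sum
        = (([a, b, c, d, e, f] : List G).take (j.1 + 1)).sum → i = j := by
  have t4 : d + e + f ≠ 0 := by
    intro hh
    apply t1
    rw [show a + b + c = (a + b + c + d + e + f) - (d + e + f) by abel, hs, hh, sub_zero]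
  have q1 : b + c + d + e ≠ 0 := by
    intro hh
    apply p6
    rw [show f + a = (a + b + c + d + e + f) - (b + c + d + e) by abel, hs, hh, sub_zero]
  have q2 : c + d + e + f ≠ 0 := by
    intro hh
    apply p1
    rw [show a + b = (a + b + c + d + e + f) - (c + d + e + f) by abel, hs, hh, sub_zero]
  have q3 : b + c + d + e + f ≠ 0 := by
    intro hh
    apply h1
    rw [show a = (a + b + c + d + e + f) - (b + c + d + e + f) by abel, hs, hh, sub_zero]
  intro i j h
  fin_cases i <;> fin_cases j <;>
    simp only [List.length_cons, List.length_nil, Fin.mk_one, Fin.isValue, Fin.val_one,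
      Fin.zero_eta, Fin.val_zero, Fin.mk_zero, List.take_succ_cons, List.take_zero,
      List.sum_cons, List.sum_nil, add_zero, Fin.mk.injEq] at h ⊢ <;>
    first
      | rfl
      | (exfalso
         first
           | (apply h2; first | (rw [← sub_eq_zero_of_eq h]; abel1) | (rw [← sub_eq_zero_of_eq h.symm]; abel1))
           | (apply h3; first | (rw [← sub_eq_zero_of_eq h]; abel1) | (rw [← sub_eq_zero_of_eq h.symm]; abel1))
           | (apply h4; first | (rw [← sub_eq_zero_of_eq h]; abel1) | (rw [← sub_eq_zero_of_eq h.symm]; abel1))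
           | (apply h5; first | (rw [← sub_eq_zero_of_eq h]; abel1) | (rw [← sub_eq_zero_of_eq h.symm]; abel1))
           | (apply h6; first | (rw [← sub_eq_zero_of_eq h]; abel1) | (rw [← sub_eq_zero_of_eq h.symm]; abel1))
           | (apply p2; first | (rw [← sub_eq_zero_of_eq h]; abel1) | (rw [← sub_eq_zero_of_eq h.symm]; abel1))
           | (apply p3; first | (rw [← sub_eq_zero_of_eq h]; abel1) | (rw [← sub_eq_zero_of_eq h.symm]; abel1))
           | (apply p4; first | (rw [← sub_eq_zero_of_eq h]; abel1) | (rw [← sub_eq_zero_of_eq h.symm]; abel1))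
           | (apply p5; first | (rw [← sub_eq_zero_of_eq h]; abel1) | (rw [← sub_eq_zero_of_eq h.symm]; abel1))
           | (apply t2; first | (rw [← sub_eq_zero_of_eq h]; abel1) | (rw [← sub_eq_zero_of_eq h.symm]; abel1))
           | (apply t3; first | (rw [← sub_eq_zero_of_eq h]; abel1) | (rw [← sub_eq_zero_of_eq h.symm]; abel1))
           | (apply t4; first | (rw [← sub_eq_zero_of_eq h]; abel1) | (rw [← sub_eq_zero_of_eq h.symm]; abel1))
           | (apply q1; first | (rw [← sub_eq_zero_of_eq h]; abel1) | (rw [← sub_eq_zero_of_eq h.symm]; abel1))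
           | (apply q2; first | (rw [← sub_eq_zero_of_eq h]; abel1) | (rw [← sub_eq_zero_of_eq h.symm]; abel1))
           | (apply q3; first | (rw [← sub_eq_zero_of_eq h]; abel1) | (rw [← sub_eq_zero_of_eq h.symm]; abel1)))

/-- Build lemma: if `a + x + y = 0` is a zero triple, the alternating arrangement
`[a, u, x, v, y, w]` has distinct partial sums. -/
private lemma build (a u x v y w : G)
    (hnd : ([a, u, x, v, y, w] : List G).Nodup)
    (hz : ∀ p ∈ ([a, u, x, v, y, w] : List G), p ≠ 0)
    (hp : ∀ p ∈ ([a, u, x, v, y, w] : List G), ∀ q ∈ ([a, u, x, v, y, w] : List G),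
      p ≠ q → p + q ≠ 0)
    (hs : a + u + x + v + y + w = 0)
    (hT : a + x + y = 0) :
    ∀ i j : Fin ([a, u, x, v, y, w] : List G).length,
      (([a, u, x, v, y, w] : List G).take (i.1 + 1)).sum
        = (([a, u, x, v, y, w] : List G).take (j.1 + 1)).sum → i = j := by
  simp only [List.nodup_cons, List.mem_cons, List.not_mem_nil, or_false, not_or,
    not_false_eq_true, List.nodup_nil, and_true] at hnd
  obtain ⟨⟨hau, hax, hav, hay, haw⟩, ⟨hux, huv, huy, huw⟩, ⟨hxv, hxy, hxw⟩, ⟨hvy, hvw⟩, hyw⟩ := hnd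
  replace hau : a ≠ u := hau
  replace hav : a ≠ v := hav
  replace haw : a ≠ w := haw
  replace hux : u ≠ x := hux
  replace huy : u ≠ y := huy
  replace hxv : x ≠ v := hxv
  replace hxw : x ≠ w := hxw
  replace hvy : v ≠ y := hvy
  replace hyw : y ≠ w := hyw
  have T1 : a + u + x ≠ 0 := by
    intro hh
    apply huy
    have h9 : u - y = 0 := by
      rw [show u - y = (a + u + x) - (a + x + y) by abel, hh, hT, sub_zero]
    exact sub_eq_zero.mp h9
  have T2 : u + x + v ≠ 0 := by
    intro hh
    apply hxw
    have h9 : x - w = 0 := by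
      rw [show x - w = (u + x + v) + (a + x + y) - (a + u + x + v + y + w) by abel,
        hh, hT, hs]
      abel
    exact sub_eq_zero.mp h9
  have T3 : x + v + y ≠ 0 := by
    intro hh
    apply hav
    have h9 : a - v = 0 := by
      rw [show a - v = (a + x + y) - (x + v + y) by abel, hh, hT, sub_zero]
    exact sub_eq_zero.mp h9
  exact sumKey a u x v y w hs
    (hz a (by simp)) (hz u (by simp)) (hz x (by simp)) (hz v (by simp)) (hz y (by simp))
    (hz w (by simp))
    (hp a (by simp) u (by simp) hau) (hp u (by simp) x (by simp) hux)
    (hp x (by simp) v (by simp) hxv) (hp v (by simp) y (by simp) hvy)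
    (hp y (by simp) w (by simp) hyw) (hp w (by simp) a (by simp) haw.symm)
    T1 T2 T3

end Aux

set_option maxHeartbeats 2000000 in
theorem stmt_2 {G : Type*} [AddCommGroup G] [DecidableEq G] (A : Finset G)
    (h0 : (0 : G) ∉ A)
    (hpair : ∀ x ∈ A, -x ∈ A → x = -x)
    (hsum : ∑ a ∈ A, a = 0)
    (hcard : A.card = 6) :
    ∃ l : List G, l.Nodup ∧ l.toFinset = A ∧
      ∀ i j : Fin l.length,
        (l.take (i.1 + 1)).sum = (l.take (j.1 + 1)).sum → i = j := by
  have hp0 : ∀ x ∈ A, ∀ y ∈ A, x ≠ y → x + y ≠ 0 := by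
    intro x hx y hy hxy hxy0
    have hyx : -x = y := neg_eq_of_add_eq_zero_right hxy0
    have hx2 : x = -x := hpair x hx (by rwa [hyx])
    exact hxy (hx2.trans hyx)
  obtain ⟨a, b, c, d, e, f, hl⟩ := exists_six A.toList (by simp [hcard])
  have hset : A = ([a, b, c, d, e, f] : List G).toFinset := by
    rw [← hl, Finset.toList_toFinset]
  have hnd : ([a, b, c, d, e, f] : List G).Nodup := hl ▸ A.nodup_toList
  have hmem : ∀ p : G, p ∈ ([a, b, c, d, e, f] : List G) → p ∈ A := by
    intro p hp
    rw [hset]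
    exact List.mem_toFinset.mpr hp
  have hs : a + b + c + d + e + f = 0 := by
    have h9 : (A.toList.map id).sum = ∑ p ∈ A, p := Finset.sum_map_toList A id
    rw [hl] at h9
    simpa [← add_assoc] using h9.trans hsum
  have hz : ∀ p ∈ ([a, b, c, d, e, f] : List G), p ≠ 0 := by
    intro p hp h9
    exact h0 (h9 ▸ hmem p hp)
  have hp : ∀ p ∈ ([a, b, c, d, e, f] : List G), ∀ q ∈ ([a, b, c, d, e, f] : List G),
      p ≠ q → p + q ≠ 0 := by
    intro p hp q hq
    exact hp0 p (hmem p hp) q (hmem q hq)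
  rw [hset]
  clear hp0 hmem hset hl hsum hcard h0 hpair
  have hnd' := hnd
  simp only [List.nodup_cons, List.mem_cons, List.not_mem_nil, or_false, not_or,
    not_false_eq_true, List.nodup_nil, and_true] at hnd'
  obtain ⟨⟨nab, nac, nad, nae, naf⟩, ⟨nbc, nbd, nbe, nbf⟩, ⟨ncd, nce, ncf⟩, ⟨nde, ndf⟩, nef⟩ :=
    hnd'
  replace nab : a ≠ b := nab
  replace nac : a ≠ c := nac
  replace nad : a ≠ d := nad
  replace nae : a ≠ e := nae
  replace naf : a ≠ f := naf
  replace nbc : b ≠ c := nbc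
  replace nbd : b ≠ d := nbd
  replace nbe : b ≠ e := nbe
  replace nbf : b ≠ f := nbf
  replace ncd : c ≠ d := ncd
  replace nce : c ≠ e := nce
  replace ncf : c ≠ f := ncf
  replace nde : d ≠ e := nde
  replace ndf : d ≠ f := ndf
  replace nef : e ≠ f := nef
  have hfs : ∀ l' : List G, (∀ p : G, p ∈ l' ↔ p ∈ ([a, b, c, d, e, f] : List G)) →
      l'.toFinset = ([a, b, c, d, e, f] : List G).toFinset := by
    intro l' h9
    ext p
    simp only [List.mem_toFinset]
    exact h9 p
  by_cases c1 : a + b + c = 0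
  · have hnd2 : ([a, d, b, e, c, f] : List G).Nodup := by
      simp only [List.nodup_cons, List.mem_cons, List.not_mem_nil, or_false, not_or,
        not_false_eq_true, List.nodup_nil, and_true]
      exact ⟨⟨nad, nab, nae, nac, naf⟩, ⟨Ne.symm nbd, nde, Ne.symm ncd, ndf⟩, ⟨nbe, nbc, nbf⟩, ⟨Ne.symm nce, nef⟩, ncf⟩
    have hmem2 : ∀ p : G, p ∈ ([a, d, b, e, c, f] : List G) ↔ p ∈ ([a, b, c, d, e, f] : List G) := by
      intro p; simp; try tauto
    exact ⟨[a, d, b, e, c, f], hnd2, hfs _ hmem2,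
      build a d b e c f hnd2 (fun p h9 => hz p ((hmem2 p).mp h9))
        (fun p h9 q h9' => hp p ((hmem2 p).mp h9) q ((hmem2 q).mp h9'))
        (by rw [show a + d + b + e + c + f = a + b + c + d + e + f by abel]; exact hs) c1⟩
  by_cases c2 : a + b + d = 0
  · have hnd2 : ([a, c, b, e, d, f] : List G).Nodup := by
      simp only [List.nodup_cons, List.mem_cons, List.not_mem_nil, or_false, not_or,
        not_false_eq_true, List.nodup_nil, and_true]
      exact ⟨⟨nac, nab, nae, nad, naf⟩, ⟨Ne.symm nbc, nce, ncd, ncf⟩, ⟨nbe, nbd, nbf⟩, ⟨Ne.symm nde, nef⟩, ndf⟩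
    have hmem2 : ∀ p : G, p ∈ ([a, c, b, e, d, f] : List G) ↔ p ∈ ([a, b, c, d, e, f] : List G) := by
      intro p; simp; try tauto
    exact ⟨[a, c, b, e, d, f], hnd2, hfs _ hmem2,
      build a c b e d f hnd2 (fun p h9 => hz p ((hmem2 p).mp h9))
        (fun p h9 q h9' => hp p ((hmem2 p).mp h9) q ((hmem2 q).mp h9'))
        (by rw [show a + c + b + e + d + f = a + b + c + d + e + f by abel]; exact hs) c2⟩
  by_cases c3 : a + b + e = 0
  · have hnd2 : ([a, c, b, d, e, f] : List G).Nodup := by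
      simp only [List.nodup_cons, List.mem_cons, List.not_mem_nil, or_false, not_or,
        not_false_eq_true, List.nodup_nil, and_true]
      exact ⟨⟨nac, nab, nad, nae, naf⟩, ⟨Ne.symm nbc, ncd, nce, ncf⟩, ⟨nbd, nbe, nbf⟩, ⟨nde, ndf⟩, nef⟩
    have hmem2 : ∀ p : G, p ∈ ([a, c, b, d, e, f] : List G) ↔ p ∈ ([a, b, c, d, e, f] : List G) := by
      intro p; simp; try tauto
    exact ⟨[a, c, b, d, e, f], hnd2, hfs _ hmem2,
      build a c b d e f hnd2 (fun p h9 => hz p ((hmem2 p).mp h9))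
        (fun p h9 q h9' => hp p ((hmem2 p).mp h9) q ((hmem2 q).mp h9'))
        (by rw [show a + c + b + d + e + f = a + b + c + d + e + f by abel]; exact hs) c3⟩
  by_cases c4 : a + b + f = 0
  · have hnd2 : ([a, c, b, d, f, e] : List G).Nodup := by
      simp only [List.nodup_cons, List.mem_cons, List.not_mem_nil, or_false, not_or,
        not_false_eq_true, List.nodup_nil, and_true]
      exact ⟨⟨nac, nab, nad, naf, nae⟩, ⟨Ne.symm nbc, ncd, ncf, nce⟩, ⟨nbd, nbf, nbe⟩, ⟨ndf, nde⟩, Ne.symm nef⟩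
    have hmem2 : ∀ p : G, p ∈ ([a, c, b, d, f, e] : List G) ↔ p ∈ ([a, b, c, d, e, f] : List G) := by
      intro p; simp; try tauto
    exact ⟨[a, c, b, d, f, e], hnd2, hfs _ hmem2,
      build a c b d f e hnd2 (fun p h9 => hz p ((hmem2 p).mp h9))
        (fun p h9 q h9' => hp p ((hmem2 p).mp h9) q ((hmem2 q).mp h9'))
        (by rw [show a + c + b + d + f + e = a + b + c + d + e + f by abel]; exact hs) c4⟩
  by_cases c5 : a + c + d = 0
  · have hnd2 : ([a, b, c, e, d, f] : List G).Nodup := by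
      simp only [List.nodup_cons, List.mem_cons, List.not_mem_nil, or_false, not_or,
        not_false_eq_true, List.nodup_nil, and_true]
      exact ⟨⟨nab, nac, nae, nad, naf⟩, ⟨nbc, nbe, nbd, nbf⟩, ⟨nce, ncd, ncf⟩, ⟨Ne.symm nde, nef⟩, ndf⟩
    have hmem2 : ∀ p : G, p ∈ ([a, b, c, e, d, f] : List G) ↔ p ∈ ([a, b, c, d, e, f] : List G) := by
      intro p; simp; try tauto
    exact ⟨[a, b, c, e, d, f], hnd2, hfs _ hmem2,
      build a b c e d f hnd2 (fun p h9 => hz p ((hmem2 p).mp h9))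
        (fun p h9 q h9' => hp p ((hmem2 p).mp h9) q ((hmem2 q).mp h9'))
        (by rw [show a + b + c + e + d + f = a + b + c + d + e + f by abel]; exact hs) c5⟩
  by_cases c6 : a + c + e = 0
  · have hnd2 : ([a, b, c, d, e, f] : List G).Nodup := by
      simp only [List.nodup_cons, List.mem_cons, List.not_mem_nil, or_false, not_or,
        not_false_eq_true, List.nodup_nil, and_true]
      exact ⟨⟨nab, nac, nad, nae, naf⟩, ⟨nbc, nbd, nbe, nbf⟩, ⟨ncd, nce, ncf⟩, ⟨nde, ndf⟩, nef⟩
    have hmem2 : ∀ p : G, p ∈ ([a, b, c, d, e, f] : List G) ↔ p ∈ ([a, b, c, d, e, f] : List G) := by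
      intro p; simp; try tauto
    exact ⟨[a, b, c, d, e, f], hnd2, hfs _ hmem2,
      build a b c d e f hnd2 (fun p h9 => hz p ((hmem2 p).mp h9))
        (fun p h9 q h9' => hp p ((hmem2 p).mp h9) q ((hmem2 q).mp h9'))
        (by rw [show a + b + c + d + e + f = a + b + c + d + e + f by abel]; exact hs) c6⟩
  by_cases c7 : a + c + f = 0
  · have hnd2 : ([a, b, c, d, f, e] : List G).Nodup := by
      simp only [List.nodup_cons, List.mem_cons, List.not_mem_nil, or_false, not_or,
        not_false_eq_true, List.nodup_nil, and_true]
      exact ⟨⟨nab, nac, nad, naf, nae⟩, ⟨nbc, nbd, nbf, nbe⟩, ⟨ncd, ncf, nce⟩, ⟨ndf, nde⟩, Ne.symm nef⟩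
    have hmem2 : ∀ p : G, p ∈ ([a, b, c, d, f, e] : List G) ↔ p ∈ ([a, b, c, d, e, f] : List G) := by
      intro p; simp; try tauto
    exact ⟨[a, b, c, d, f, e], hnd2, hfs _ hmem2,
      build a b c d f e hnd2 (fun p h9 => hz p ((hmem2 p).mp h9))
        (fun p h9 q h9' => hp p ((hmem2 p).mp h9) q ((hmem2 q).mp h9'))
        (by rw [show a + b + c + d + f + e = a + b + c + d + e + f by abel]; exact hs) c7⟩
  by_cases c8 : a + d + e = 0
  · have hnd2 : ([a, b, d, c, e, f] : List G).Nodup := by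
      simp only [List.nodup_cons, List.mem_cons, List.not_mem_nil, or_false, not_or,
        not_false_eq_true, List.nodup_nil, and_true]
      exact ⟨⟨nab, nad, nac, nae, naf⟩, ⟨nbd, nbc, nbe, nbf⟩, ⟨Ne.symm ncd, nde, ndf⟩, ⟨nce, ncf⟩, nef⟩
    have hmem2 : ∀ p : G, p ∈ ([a, b, d, c, e, f] : List G) ↔ p ∈ ([a, b, c, d, e, f] : List G) := by
      intro p; simp; try tauto
    exact ⟨[a, b, d, c, e, f], hnd2, hfs _ hmem2,
      build a b d c e f hnd2 (fun p h9 => hz p ((hmem2 p).mp h9))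
        (fun p h9 q h9' => hp p ((hmem2 p).mp h9) q ((hmem2 q).mp h9'))
        (by rw [show a + b + d + c + e + f = a + b + c + d + e + f by abel]; exact hs) c8⟩
  by_cases c9 : a + d + f = 0
  · have hnd2 : ([a, b, d, c, f, e] : List G).Nodup := by
      simp only [List.nodup_cons, List.mem_cons, List.not_mem_nil, or_false, not_or,
        not_false_eq_true, List.nodup_nil, and_true]
      exact ⟨⟨nab, nad, nac, naf, nae⟩, ⟨nbd, nbc, nbf, nbe⟩, ⟨Ne.symm ncd, ndf, nde⟩, ⟨ncf, nce⟩, Ne.symm nef⟩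
    have hmem2 : ∀ p : G, p ∈ ([a, b, d, c, f, e] : List G) ↔ p ∈ ([a, b, c, d, e, f] : List G) := by
      intro p; simp; try tauto
    exact ⟨[a, b, d, c, f, e], hnd2, hfs _ hmem2,
      build a b d c f e hnd2 (fun p h9 => hz p ((hmem2 p).mp h9))
        (fun p h9 q h9' => hp p ((hmem2 p).mp h9) q ((hmem2 q).mp h9'))
        (by rw [show a + b + d + c + f + e = a + b + c + d + e + f by abel]; exact hs) c9⟩
  by_cases c10 : a + e + f = 0
  · have hnd2 : ([a, b, e, c, f, d] : List G).Nodup := by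
      simp only [List.nodup_cons, List.mem_cons, List.not_mem_nil, or_false, not_or,
        not_false_eq_true, List.nodup_nil, and_true]
      exact ⟨⟨nab, nae, nac, naf, nad⟩, ⟨nbe, nbc, nbf, nbd⟩, ⟨Ne.symm nce, nef, Ne.symm nde⟩, ⟨ncf, ncd⟩, Ne.symm ndf⟩
    have hmem2 : ∀ p : G, p ∈ ([a, b, e, c, f, d] : List G) ↔ p ∈ ([a, b, c, d, e, f] : List G) := by
      intro p; simp; try tauto
    exact ⟨[a, b, e, c, f, d], hnd2, hfs _ hmem2,
      build a b e c f d hnd2 (fun p h9 => hz p ((hmem2 p).mp h9))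
        (fun p h9 q h9' => hp p ((hmem2 p).mp h9) q ((hmem2 q).mp h9'))
        (by rw [show a + b + e + c + f + d = a + b + c + d + e + f by abel]; exact hs) c10⟩
  refine ⟨[a, b, c, d, e, f], hnd, hfs _ (fun p => Iff.rfl),
    sumKey a b c d e f hs (hz a (by simp)) (hz b (by simp)) (hz c (by simp)) (hz d (by simp))
      (hz e (by simp)) (hz f (by simp))
      (hp a (by simp) b (by simp) nab) (hp b (by simp) c (by simp) nbc)
      (hp c (by simp) d (by simp) ncd) (hp d (by simp) e (by simp) nde)
      (hp e (by simp) f (by simp) nef) (hp f (by simp) a (by simp) (Ne.symm naf))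
      c1 ?_ ?_⟩
  · intro hh
    exact c10 (by rw [show a + e + f = (a + b + c + d + e + f) - (b + c + d) by abel,
      hs, hh, sub_zero])
  · intro hh
    exact c4 (by rw [show a + b + f = (a + b + c + d + e + f) - (c + d + e) by abel,
      hs, hh, sub_zero])
end

section
/- Let G be an abelian group and let A be a finite subset of G \ {0} with |A| = 7 such that A contains no 2-subset {x, -x} and the sum of all elements of A is 0. Then there exists an ordering of the elements of A whose partial sums are pairwise distinct. -/
section SimpleOrdering

variable {G : Type*} [AddCommGroup G]

private lemma blk {x S T : G}
    (hne : x ≠ 0) (h : S = T) (hd : x = T - S) : False := by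
  apply hne; rw [hd, ← h, sub_self]

private lemma blkc {x W S T : G}
    (hne : x ≠ 0) (hW : W = 0) (h : S = T) (hd : x = W - (T - S)) : False := by
  apply hne; rw [hd, hW, ← h, sub_self, sub_zero]

private lemma cancel2 {u v X Y : G} (hX : X = 0) (hY : Y = 0)
    (hd : u - v = X - Y) : u = v := by
  rw [← sub_eq_zero, hd, hX, hY, sub_self]

private lemma zero3 {x T Y Z : G} (hT : T = 0) (hY : Y = 0) (hZ : Z = 0)
    (hd : x = T - Y - Z) : x = 0 := by
  rw [hd, hT, hY, hZ, sub_zero, sub_zero]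

set_option maxHeartbeats 2000000 in
private lemma verify (p a b c d e f : G)
    (hp : p ≠ 0) (ha : a ≠ 0) (hb : b ≠ 0) (hc : c ≠ 0) (hd : d ≠ 0) (he : e ≠ 0) (hf : f ≠ 0)
    (hpa : p + a ≠ 0) (hab : a + b ≠ 0) (hbc : b + c ≠ 0) (hcd : c + d ≠ 0)
    (hde : d + e ≠ 0) (hef : e + f ≠ 0) (hfp : f + p ≠ 0)
    (hpab : p + a + b ≠ 0) (habc : a + b + c ≠ 0) (hbcd : b + c + d ≠ 0)
    (hcde : c + d + e ≠ 0) (hdef : d + e + f ≠ 0) (hefp : e + f + p ≠ 0)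
    (hfpa : f + p + a ≠ 0)
    (htot : p + a + b + c + d + e + f = 0) :
    ∀ i j : Fin 7,
      (([p,a,b,c,d,e,f] : List G).take (i.1 + 1)).sum =
        (([p,a,b,c,d,e,f] : List G).take (j.1 + 1)).sum → i = j := by
  intro i j
  fin_cases i <;> fin_cases j <;> intro h <;>
    simp only [List.take_succ_cons, List.take_zero, List.sum_cons, List.sum_nil, add_zero,
      Fin.isValue, Fin.mk_one, Fin.val_mk] at h ⊢ <;>
  first
    | rfl
    | (refine absurd (blk ha h ?_) not_false; abel1)
    | (refine absurd (blk ha h.symm ?_) not_false; abel1)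
    | (refine absurd (blk hb h ?_) not_false; abel1)
    | (refine absurd (blk hb h.symm ?_) not_false; abel1)
    | (refine absurd (blk hc h ?_) not_false; abel1)
    | (refine absurd (blk hc h.symm ?_) not_false; abel1)
    | (refine absurd (blk hd h ?_) not_false; abel1)
    | (refine absurd (blk hd h.symm ?_) not_false; abel1)
    | (refine absurd (blk he h ?_) not_false; abel1)
    | (refine absurd (blk he h.symm ?_) not_false; abel1)
    | (refine absurd (blk hf h ?_) not_false; abel1)
    | (refine absurd (blk hf h.symm ?_) not_false; abel1)
    | (refine absurd (blk hab h ?_) not_false; abel1)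
    | (refine absurd (blk hab h.symm ?_) not_false; abel1)
    | (refine absurd (blk hbc h ?_) not_false; abel1)
    | (refine absurd (blk hbc h.symm ?_) not_false; abel1)
    | (refine absurd (blk hcd h ?_) not_false; abel1)
    | (refine absurd (blk hcd h.symm ?_) not_false; abel1)
    | (refine absurd (blk hde h ?_) not_false; abel1)
    | (refine absurd (blk hde h.symm ?_) not_false; abel1)
    | (refine absurd (blk hef h ?_) not_false; abel1)
    | (refine absurd (blk hef h.symm ?_) not_false; abel1)
    | (refine absurd (blk habc h ?_) not_false; abel1)
    | (refine absurd (blk habc h.symm ?_) not_false; abel1)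
    | (refine absurd (blk hbcd h ?_) not_false; abel1)
    | (refine absurd (blk hbcd h.symm ?_) not_false; abel1)
    | (refine absurd (blk hcde h ?_) not_false; abel1)
    | (refine absurd (blk hcde h.symm ?_) not_false; abel1)
    | (refine absurd (blk hdef h ?_) not_false; abel1)
    | (refine absurd (blk hdef h.symm ?_) not_false; abel1)
    | (refine absurd (blkc hefp htot h ?_) not_false; abel1)
    | (refine absurd (blkc hefp htot h.symm ?_) not_false; abel1)
    | (refine absurd (blkc hfpa htot h ?_) not_false; abel1)
    | (refine absurd (blkc hfpa htot h.symm ?_) not_false; abel1)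
    | (refine absurd (blkc hpab htot h ?_) not_false; abel1)
    | (refine absurd (blkc hpab htot h.symm ?_) not_false; abel1)
    | (refine absurd (blkc hfp htot h ?_) not_false; abel1)
    | (refine absurd (blkc hfp htot h.symm ?_) not_false; abel1)
    | (refine absurd (blkc hpa htot h ?_) not_false; abel1)
    | (refine absurd (blkc hpa htot h.symm ?_) not_false; abel1)
    | (refine absurd (blkc hp htot h ?_) not_false; abel1)
    | (refine absurd (blkc hp htot h.symm ?_) not_false; abel1)

private lemma extract2 [DecidableEq G] {A s : Finset G}
    (hs : s ⊆ A) (hcA : A.card = 7) (hcs : s.card = 5) :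
    ∃ u v : G, u ≠ v ∧ u ∈ A ∧ v ∈ A ∧ u ∉ s ∧ v ∉ s ∧ A = s ∪ {u, v} := by
  have hc : (A \ s).card = 2 := by rw [Finset.card_sdiff_of_subset hs, hcA, hcs]
  obtain ⟨u, v, huv, ht⟩ := Finset.card_eq_two.mp hc
  have hu : u ∈ A \ s := by rw [ht]; simp
  have hv : v ∈ A \ s := by rw [ht]; simp
  rw [Finset.mem_sdiff] at hu hv
  exact ⟨u, v, huv, hu.1, hv.1, hu.2, hv.2,
    by rw [← Finset.union_sdiff_of_subset hs, ht]⟩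

private lemma extract4 [DecidableEq G] {A s : Finset G}
    (hs : s ⊆ A) (hcA : A.card = 7) (hcs : s.card = 3) :
    ∃ u v w x : G, (u ≠ v ∧ u ≠ w ∧ u ≠ x ∧ v ≠ w ∧ v ≠ x ∧ w ≠ x) ∧
      (u ∈ A ∧ v ∈ A ∧ w ∈ A ∧ x ∈ A) ∧ (u ∉ s ∧ v ∉ s ∧ w ∉ s ∧ x ∉ s) ∧
      A = s ∪ {u, v, w, x} := by
  have hc : (A \ s).card = 3 + 1 := by rw [Finset.card_sdiff_of_subset hs, hcA, hcs]
  obtain ⟨u, t, hut, het, hct⟩ := Finset.card_eq_succ.mp hc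
  obtain ⟨v, w, x, hvw, hvx, hwx, htv⟩ := Finset.card_eq_three.mp hct
  subst htv
  have hmem : ∀ y, y ∈ insert u ({v, w, x} : Finset G) → y ∈ A ∧ y ∉ s := by
    intro y hy; rw [het] at hy; exact Finset.mem_sdiff.mp hy
  simp only [Finset.mem_insert, Finset.mem_singleton, not_or] at hut
  obtain ⟨huv, huw, hux⟩ := hut
  have h1 := hmem u (by simp)
  have h2 := hmem v (by simp)
  have h3 := hmem w (by simp)
  have h4 := hmem x (by simp)
  exact ⟨u, v, w, x, ⟨huv, huw, hux, hvw, hvx, hwx⟩, ⟨h1.1, h2.1, h3.1, h4.1⟩,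
    ⟨h1.2, h2.2, h3.2, h4.2⟩, by rw [← Finset.union_sdiff_of_subset hs, ← het]⟩

private lemma sum_seven [DecidableEq G] {A : Finset G} {x0 x1 x2 x3 x4 x5 x6 : G}
    (hAeq : A = {x0,x1,x2,x3,x4,x5,x6}) (hsum : ∑ a ∈ A, a = 0)
    (n01 : x0 ≠ x1) (n02 : x0 ≠ x2) (n03 : x0 ≠ x3) (n04 : x0 ≠ x4) (n05 : x0 ≠ x5) (n06 : x0 ≠ x6)
    (n12 : x1 ≠ x2) (n13 : x1 ≠ x3) (n14 : x1 ≠ x4) (n15 : x1 ≠ x5) (n16 : x1 ≠ x6)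
    (n23 : x2 ≠ x3) (n24 : x2 ≠ x4) (n25 : x2 ≠ x5) (n26 : x2 ≠ x6)
    (n34 : x3 ≠ x4) (n35 : x3 ≠ x5) (n36 : x3 ≠ x6)
    (n45 : x4 ≠ x5) (n46 : x4 ≠ x6) (n56 : x5 ≠ x6) :
    x0 + x1 + x2 + x3 + x4 + x5 + x6 = 0 := by
  rw [hAeq] at hsum
  rw [Finset.sum_insert (by simp [n01,n02,n03,n04,n05,n06]),
      Finset.sum_insert (by simp [n12,n13,n14,n15,n16]),
      Finset.sum_insert (by simp [n23,n24,n25,n26]),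
      Finset.sum_insert (by simp [n34,n35,n36]),
      Finset.sum_insert (by simp [n45,n46]),
      Finset.sum_insert (by simp [n56]),
      Finset.sum_singleton] at hsum
  rw [← hsum]; abel

set_option maxHeartbeats 1000000 in
private lemma assemble [DecidableEq G] (A : Finset G)
    (h0 : (0 : G) ∉ A)
    (hpair : ∀ x ∈ A, -x ∈ A → x = -x)
    (x0 x1 x2 x3 x4 x5 x6 : G)
    (m0 : x0 ∈ A) (m1 : x1 ∈ A) (m2 : x2 ∈ A) (m3 : x3 ∈ A) (m4 : x4 ∈ A)
    (m5 : x5 ∈ A) (m6 : x6 ∈ A)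
    (n01 : x0 ≠ x1) (n02 : x0 ≠ x2) (n03 : x0 ≠ x3) (n04 : x0 ≠ x4) (n05 : x0 ≠ x5) (n06 : x0 ≠ x6)
    (n12 : x1 ≠ x2) (n13 : x1 ≠ x3) (n14 : x1 ≠ x4) (n15 : x1 ≠ x5) (n16 : x1 ≠ x6)
    (n23 : x2 ≠ x3) (n24 : x2 ≠ x4) (n25 : x2 ≠ x5) (n26 : x2 ≠ x6)
    (n34 : x3 ≠ x4) (n35 : x3 ≠ x5) (n36 : x3 ≠ x6)
    (n45 : x4 ≠ x5) (n46 : x4 ≠ x6) (n56 : x5 ≠ x6)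
    (hAeq : A = {x0,x1,x2,x3,x4,x5,x6})
    (htot : x0 + x1 + x2 + x3 + x4 + x5 + x6 = 0)
    (arc1 : x0 + x1 + x2 ≠ 0) (arc2 : x1 + x2 + x3 ≠ 0) (arc3 : x2 + x3 + x4 ≠ 0)
    (arc4 : x3 + x4 + x5 ≠ 0) (arc5 : x4 + x5 + x6 ≠ 0) (arc6 : x5 + x6 + x0 ≠ 0)
    (arc7 : x6 + x0 + x1 ≠ 0) :
    ∃ l : List G, l.Nodup ∧ l.toFinset = A ∧
      ∀ i j : Fin l.length,
        (l.take (i.1 + 1)).sum = (l.take (j.1 + 1)).sum → i = j := by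
  have hz : ∀ x, x ∈ A → x ≠ 0 := fun x hx h => h0 (h ▸ hx)
  have F1 : ∀ x, x ∈ A → ∀ y, y ∈ A → x ≠ y → x + y ≠ 0 := by
    intro x hx y hy hne h
    have hyx : y = -x := eq_neg_of_add_eq_zero_right h
    have hxA : -x ∈ A := hyx ▸ hy
    have hxx := hpair x hx hxA
    exact hne (hxx.trans hyx.symm)
  refine ⟨[x0,x1,x2,x3,x4,x5,x6], ?_, ?_, ?_⟩
  · simp [n01,n02,n03,n04,n05,n06,n12,n13,n14,n15,n16,n23,n24,n25,n26,n34,n35,n36,n45,n46,n56]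
  · ext y; simp [hAeq]
  · intro i j
    exact verify x0 x1 x2 x3 x4 x5 x6 (hz x0 m0) (hz x1 m1) (hz x2 m2) (hz x3 m3) (hz x4 m4)
      (hz x5 m5) (hz x6 m6)
      (F1 x0 m0 x1 m1 n01) (F1 x1 m1 x2 m2 n12) (F1 x2 m2 x3 m3 n23) (F1 x3 m3 x4 m4 n34)
      (F1 x4 m4 x5 m5 n45) (F1 x5 m5 x6 m6 n56) (F1 x6 m6 x0 m0 (Ne.symm n06))
      arc1 arc2 arc3 arc4 arc5 arc6 arc7 htot i j

end SimpleOrdering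


private lemma move {G : Type*} [AddCommGroup G] {Y X : G} (h : X = 0) (e : Y = X) : Y = 0 :=
  e.trans h

set_option maxHeartbeats 8000000 in
theorem stmt_3 {G : Type*} [AddCommGroup G] [DecidableEq G] (A : Finset G)
    (h0 : (0 : G) ∉ A)
    (hpair : ∀ x ∈ A, -x ∈ A → x = -x)
    (hsum : ∑ a ∈ A, a = 0)
    (hcard : A.card = 7) :
    ∃ l : List G, l.Nodup ∧ l.toFinset = A ∧
      ∀ i j : Fin l.length,
        (l.take (i.1 + 1)).sum = (l.take (j.1 + 1)).sum → i = j := by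
  classical
  have hz : ∀ x, x ∈ A → x ≠ 0 := fun x hx h => h0 (h ▸ hx)
  by_cases H2 : ∃ q u1 v1 u2 v2 : G, q ∈ A ∧ u1 ∈ A ∧ v1 ∈ A ∧ u2 ∈ A ∧ v2 ∈ A ∧
      q ≠ u1 ∧ q ≠ v1 ∧ q ≠ u2 ∧ q ≠ v2 ∧ u1 ≠ v1 ∧ u1 ≠ u2 ∧ u1 ≠ v2 ∧ v1 ≠ u2 ∧ v1 ≠ v2 ∧
      u2 ≠ v2 ∧ q + u1 + v1 = 0 ∧ q + u2 + v2 = 0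
  · obtain ⟨p, a1, b1, a2, b2, mp, ma1, mb1, ma2, mb2,
      npa1, npb1, npa2, npb2, na1b1, na1a2, na1b2, nb1a2, nb1b2, na2b2, E1, E2⟩ := H2
    have hs : ({p,a1,b1,a2,b2} : Finset G) ⊆ A := by
      intro y hy
      simp only [Finset.mem_insert, Finset.mem_singleton] at hy
      rcases hy with rfl|rfl|rfl|rfl|rfl <;> assumption
    have hcs : ({p,a1,b1,a2,b2} : Finset G).card = 5 := by
      rw [Finset.card_insert_of_notMem (by simp [npa1,npb1,npa2,npb2]),
          Finset.card_insert_of_notMem (by simp [na1b1,na1a2,na1b2]),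
          Finset.card_insert_of_notMem (by simp [nb1a2,nb1b2]),
          Finset.card_insert_of_notMem (by simp [na2b2]),
          Finset.card_singleton]
    obtain ⟨a3, b3, na3b3, ma3, mb3, ha3s, hb3s, hAu⟩ := extract2 hs hcard hcs
    simp only [Finset.mem_insert, Finset.mem_singleton, not_or] at ha3s hb3s
    obtain ⟨na3p, na3a1, na3b1, na3a2, na3b2⟩ := ha3s
    obtain ⟨nb3p, nb3a1, nb3b1, nb3a2, nb3b2⟩ := hb3s
    have hAeq : A = {p,a1,b1,a2,b2,a3,b3} := by
      rw [hAu]; ext y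
      simp only [Finset.mem_union, Finset.mem_insert, Finset.mem_singleton]
      constructor
      · intro h
        rcases h with h|h <;>
          first
            | (rcases h with rfl|rfl|rfl|rfl|rfl <;> simp)
            | (rcases h with rfl|rfl|rfl|rfl <;> simp)
            | (rcases h with rfl|rfl|rfl <;> simp)
            | (rcases h with rfl|rfl <;> simp)
      · rintro (rfl|rfl|rfl|rfl|rfl|rfl|rfl) <;> simp
    have htot7 : p + a1 + b1 + a2 + b2 + a3 + b3 = 0 :=
      sum_seven hAeq hsum npa1 npb1 npa2 npb2 (Ne.symm na3p) (Ne.symm nb3p)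
        na1b1 na1a2 na1b2 (Ne.symm na3a1) (Ne.symm nb3a1)
        nb1a2 nb1b2 (Ne.symm na3b1) (Ne.symm nb3b1)
        na2b2 (Ne.symm na3a2) (Ne.symm nb3a2)
        (Ne.symm na3b2) (Ne.symm nb3b2)
        na3b3
    by_cases hDa : a1 + a2 + a3 = 0
    · -- use list (p, a1, a2, b2, b3, b1, a3)
      have hDb : b1 + b2 + b3 ≠ 0 := fun h => hz p mp (zero3 htot7 hDa h (by abel1))
      refine assemble A h0 hpair p a1 a2 b2 b3 b1 a3 mp ma1 ma2 mb2 mb3 mb1 ma3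
        npa1 npa2 npb2 (Ne.symm nb3p) npb1 (Ne.symm na3p)
        na1a2 na1b2 (Ne.symm nb3a1) na1b1 (Ne.symm na3a1)
        na2b2 (Ne.symm nb3a2) (Ne.symm nb1a2) (Ne.symm na3a2)
        (Ne.symm nb3b2) (Ne.symm nb1b2) (Ne.symm na3b2)
        nb3b1 (Ne.symm na3b3) (Ne.symm na3b1)
        (by rw [hAeq]; ext y;
            simp only [Finset.mem_insert, Finset.mem_singleton]
            constructor
            · rintro (rfl|rfl|rfl|rfl|rfl|rfl|rfl) <;> simp
            · rintro (rfl|rfl|rfl|rfl|rfl|rfl|rfl) <;> simp)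
        (by rw [← htot7]; abel1)
        (fun h => nb1a2 (cancel2 h E1 (by abel1)).symm)
        (fun h => npa1 (cancel2 h E2 (by abel1)).symm)
        (fun h => nb3p (cancel2 h E2 (by abel1)))
        (fun h => hDb (move h (by abel1)))
        (fun h => hz a1 ma1 (zero3 htot7 E2 h (by abel1)))
        (fun h => na3a1 (cancel2 h E1 (by abel1)))
        (fun h => na3b1 (cancel2 h E1 (by abel1)))
    · -- use list (p, b1, b2, a2, a3, a1, b3)
      refine assemble A h0 hpair p b1 b2 a2 a3 a1 b3 mp mb1 mb2 ma2 ma3 ma1 mb3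
        npb1 npb2 npa2 (Ne.symm na3p) npa1 (Ne.symm nb3p)
        nb1b2 nb1a2 (Ne.symm na3b1) (Ne.symm na1b1) (Ne.symm nb3b1)
        (Ne.symm na2b2) (Ne.symm na3b2) (Ne.symm na1b2) (Ne.symm nb3b2)
        (Ne.symm na3a2) (Ne.symm na1a2) (Ne.symm nb3a2)
        na3a1 na3b3 (Ne.symm nb3a1)
        (by rw [hAeq]; ext y;
            simp only [Finset.mem_insert, Finset.mem_singleton]
            constructor
            · rintro (rfl|rfl|rfl|rfl|rfl|rfl|rfl) <;> simp
            · rintro (rfl|rfl|rfl|rfl|rfl|rfl|rfl) <;> simp)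
        (by rw [← htot7]; abel1)
        (fun h => na1b2 (cancel2 h E1 (by abel1)).symm)
        (fun h => npb1 (cancel2 h E2 (by abel1)).symm)
        (fun h => na3p (cancel2 h E2 (by abel1)))
        (fun h => hDa (move h (by abel1)))
        (fun h => hz b1 mb1 (zero3 htot7 E2 h (by abel1)))
        (fun h => nb3b1 (cancel2 h E1 (by abel1)))
        (fun h => nb3a1 (cancel2 h E1 (by abel1)))
  · by_cases H1 : ∃ x y z : G, x ∈ A ∧ y ∈ A ∧ z ∈ A ∧ x ≠ y ∧ x ≠ z ∧ y ≠ z ∧ x + y + z = 0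
    · obtain ⟨p, a1, b1, mp, ma1, mb1, npa1, npb1, na1b1, E1⟩ := H1
      have hs : ({p,a1,b1} : Finset G) ⊆ A := by
        intro y hy
        simp only [Finset.mem_insert, Finset.mem_singleton] at hy
        rcases hy with rfl|rfl|rfl <;> assumption
      have hcs : ({p,a1,b1} : Finset G).card = 3 := by
        rw [Finset.card_insert_of_notMem (by simp [npa1,npb1]),
            Finset.card_insert_of_notMem (by simp [na1b1]),
            Finset.card_singleton]
      obtain ⟨a2, b2, a3, b3, ⟨na2b2, na2a3, na2b3, nb2a3, nb2b3, na3b3⟩,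
        ⟨ma2, mb2, ma3, mb3⟩, ⟨ha2s, hb2s, ha3s, hb3s⟩, hAu⟩ := extract4 hs hcard hcs
      simp only [Finset.mem_insert, Finset.mem_singleton, not_or] at ha2s hb2s ha3s hb3s
      obtain ⟨na2p, na2a1, na2b1⟩ := ha2s
      obtain ⟨nb2p, nb2a1, nb2b1⟩ := hb2s
      obtain ⟨na3p, na3a1, na3b1⟩ := ha3s
      obtain ⟨nb3p, nb3a1, nb3b1⟩ := hb3s
      have hAeq : A = {p,a1,b1,a2,b2,a3,b3} := by
        rw [hAu]; ext y
        simp only [Finset.mem_union, Finset.mem_insert, Finset.mem_singleton]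
        constructor
        · intro h
          rcases h with h|h <;>
            first
              | (rcases h with rfl|rfl|rfl|rfl|rfl <;> simp)
              | (rcases h with rfl|rfl|rfl|rfl <;> simp)
              | (rcases h with rfl|rfl|rfl <;> simp)
              | (rcases h with rfl|rfl <;> simp)
        · rintro (rfl|rfl|rfl|rfl|rfl|rfl|rfl) <;> simp
      have htot7 : p + a1 + b1 + a2 + b2 + a3 + b3 = 0 :=
        sum_seven hAeq hsum npa1 npb1 (Ne.symm na2p) (Ne.symm nb2p) (Ne.symm na3p) (Ne.symm nb3p)
          na1b1 (Ne.symm na2a1) (Ne.symm nb2a1) (Ne.symm na3a1) (Ne.symm nb3a1)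
          (Ne.symm na2b1) (Ne.symm nb2b1) (Ne.symm na3b1) (Ne.symm nb3b1)
          na2b2 na2a3 na2b3
          nb2a3 nb2b3 na3b3
      refine assemble A h0 hpair p b1 b2 a2 a3 a1 b3 mp mb1 mb2 ma2 ma3 ma1 mb3
        npb1 (Ne.symm nb2p) (Ne.symm na2p) (Ne.symm na3p) npa1 (Ne.symm nb3p)
        (Ne.symm nb2b1) (Ne.symm na2b1) (Ne.symm na3b1) (Ne.symm na1b1) (Ne.symm nb3b1)
        (Ne.symm na2b2) nb2a3 nb2a1 nb2b3
        na2a3 na2a1 na2b3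
        na3a1 na3b3 (Ne.symm nb3a1)
        (by rw [hAeq]; ext y;
            simp only [Finset.mem_insert, Finset.mem_singleton]
            constructor
            · rintro (rfl|rfl|rfl|rfl|rfl|rfl|rfl) <;> simp
            · rintro (rfl|rfl|rfl|rfl|rfl|rfl|rfl) <;> simp)
        (by rw [← htot7]; abel1)
        (fun h => nb2a1 (cancel2 h E1 (by abel1)))
        (fun h => H2 ⟨b1, p, a1, b2, a2, mb1, mp, ma1, mb2, ma2,
          (Ne.symm npb1), (Ne.symm na1b1), (Ne.symm nb2b1), (Ne.symm na2b1), npa1, (Ne.symm nb2p), (Ne.symm na2p),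
          (Ne.symm nb2a1), (Ne.symm na2a1), (Ne.symm na2b2), move E1 (by abel1), h⟩)
        (fun h => hz b3 mb3 (zero3 htot7 E1 h (by abel1)))
        (fun h => H2 ⟨a1, p, b1, a2, a3, ma1, mp, mb1, ma2, ma3,
          (Ne.symm npa1), na1b1, (Ne.symm na2a1), (Ne.symm na3a1), npb1, (Ne.symm na2p), (Ne.symm na3p),
          (Ne.symm na2b1), (Ne.symm na3b1), na2a3, move E1 (by abel1), move h (by abel1)⟩)
        (fun h => H2 ⟨a1, p, b1, a3, b3, ma1, mp, mb1, ma3, mb3,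
          (Ne.symm npa1), na1b1, (Ne.symm na3a1), (Ne.symm nb3a1), npb1, (Ne.symm na3p), (Ne.symm nb3p),
          (Ne.symm na3b1), (Ne.symm nb3b1), na3b3, move E1 (by abel1), move h (by abel1)⟩)
        (fun h => nb3b1 (cancel2 h E1 (by abel1)))
        (fun h => nb3a1 (cancel2 h E1 (by abel1)))
    · obtain ⟨x0, t1, hn0, he0, hc1⟩ := Finset.card_eq_succ.mp (show A.card = 6 + 1 by omega)
      obtain ⟨x1, t2, hn1, he1, hc2⟩ := Finset.card_eq_succ.mp (show t1.card = 5 + 1 by omega)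
      obtain ⟨x2, t3, hn2, he2, hc3⟩ := Finset.card_eq_succ.mp (show t2.card = 4 + 1 by omega)
      obtain ⟨x3, t4, hn3, he3, hc4⟩ := Finset.card_eq_succ.mp (show t3.card = 3 + 1 by omega)
      obtain ⟨x4, x5, x6, n45, n46, n56, ht4⟩ := Finset.card_eq_three.mp hc4
      subst ht4
      have hAeq : A = {x0,x1,x2,x3,x4,x5,x6} := by rw [← he0, ← he1, ← he2, ← he3]
      rw [← he1, ← he2, ← he3] at hn0
      rw [← he2, ← he3] at hn1
      rw [← he3] at hn2
      simp only [Finset.mem_insert, Finset.mem_singleton, not_or] at hn0 hn1 hn2 hn3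
      obtain ⟨n01, n02, n03, n04, n05, n06⟩ := hn0
      obtain ⟨n12, n13, n14, n15, n16⟩ := hn1
      obtain ⟨n23, n24, n25, n26⟩ := hn2
      obtain ⟨n34, n35, n36⟩ := hn3
      have m0 : x0 ∈ A := by rw [hAeq]; simp
      have m1 : x1 ∈ A := by rw [hAeq]; simp
      have m2 : x2 ∈ A := by rw [hAeq]; simp
      have m3 : x3 ∈ A := by rw [hAeq]; simp
      have m4 : x4 ∈ A := by rw [hAeq]; simp
      have m5 : x5 ∈ A := by rw [hAeq]; simp
      have m6 : x6 ∈ A := by rw [hAeq]; simp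
      have htot7 : x0 + x1 + x2 + x3 + x4 + x5 + x6 = 0 :=
        sum_seven hAeq hsum n01 n02 n03 n04 n05 n06 n12 n13 n14 n15 n16
          n23 n24 n25 n26 n34 n35 n36 n45 n46 n56
      refine assemble A h0 hpair x0 x1 x2 x3 x4 x5 x6 m0 m1 m2 m3 m4 m5 m6
        n01 n02 n03 n04 n05 n06 n12 n13 n14 n15 n16 n23 n24 n25 n26 n34 n35 n36 n45 n46 n56
        hAeq htot7
        (fun h => H1 ⟨x0, x1, x2, m0, m1, m2, n01, n02, n12, h⟩)
        (fun h => H1 ⟨x1, x2, x3, m1, m2, m3, n12, n13, n23, h⟩)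
        (fun h => H1 ⟨x2, x3, x4, m2, m3, m4, n23, n24, n34, h⟩)
        (fun h => H1 ⟨x3, x4, x5, m3, m4, m5, n34, n35, n45, h⟩)
        (fun h => H1 ⟨x4, x5, x6, m4, m5, m6, n45, n46, n56, h⟩)
        (fun h => H1 ⟨x5, x6, x0, m5, m6, m0, n56, (Ne.symm n05), (Ne.symm n06), h⟩)
        (fun h => H1 ⟨x6, x0, x1, m6, m0, m1, (Ne.symm n06), (Ne.symm n16), n01, h⟩)
end

section
/- Let G be an abelian group and A ⊆ G \ {0} a finite subset of size 9 with no 2-subset {x,-x} and total sum 0. If Q_1 and Q_2 are distinct 4-element subsets of A each summing to 0, then |Q_1 ∩ Q_2| is 1 or 2. -/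
theorem stmt_11 {G : Type*} [AddCommGroup G] [DecidableEq G] (A : Finset G)
    (h0 : (0 : G) ∉ A)
    (hpair : ∀ x ∈ A, -x ∈ A → x = -x)
    (hsum : ∑ a ∈ A, a = 0) (hcard : A.card = 9)
    (Q₁ Q₂ : Finset G) (hQ₁ : Q₁ ⊆ A) (hQ₂ : Q₂ ⊆ A)
    (hc₁ : Q₁.card = 4) (hc₂ : Q₂.card = 4)
    (hs₁ : ∑ a ∈ Q₁, a = 0) (hs₂ : ∑ a ∈ Q₂, a = 0)
    (hne : Q₁ ≠ Q₂) :
    (Q₁ ∩ Q₂).card = 1 ∨ (Q₁ ∩ Q₂).card = 2 := by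
  have hle : (Q₁ ∩ Q₂).card ≤ 4 :=
    hc₁ ▸ Finset.card_le_card Finset.inter_subset_left
  have h4 : (Q₁ ∩ Q₂).card ≠ 4 := by
    intro h
    have h1 : Q₁ ∩ Q₂ = Q₁ :=
      Finset.eq_of_subset_of_card_le Finset.inter_subset_left (by omega)
    have h2 : Q₁ ∩ Q₂ = Q₂ :=
      Finset.eq_of_subset_of_card_le Finset.inter_subset_right (by omega)
    exact hne (h1 ▸ h2)
  have h3 : (Q₁ ∩ Q₂).card ≠ 3 := by
    intro h
    have e1 : (Q₁ \ Q₂).card + (Q₁ ∩ Q₂).card = Q₁.card :=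
      Finset.card_sdiff_add_card_inter Q₁ Q₂
    have e2 : (Q₂ \ Q₁).card + (Q₂ ∩ Q₁).card = Q₂.card :=
      Finset.card_sdiff_add_card_inter Q₂ Q₁
    rw [Finset.inter_comm] at e2
    have c1 : (Q₁ \ Q₂).card = 1 := by omega
    have c2 : (Q₂ \ Q₁).card = 1 := by omega
    obtain ⟨x, hx⟩ := Finset.card_eq_one.mp c1
    obtain ⟨y, hy⟩ := Finset.card_eq_one.mp c2
    have s1 : ∑ a ∈ Q₁ ∩ Q₂, a + ∑ a ∈ Q₁ \ Q₂, a = ∑ a ∈ Q₁, a :=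
      Finset.sum_inter_add_sum_sdiff Q₁ Q₂ _
    have s2 : ∑ a ∈ Q₂ ∩ Q₁, a + ∑ a ∈ Q₂ \ Q₁, a = ∑ a ∈ Q₂, a :=
      Finset.sum_inter_add_sum_sdiff Q₂ Q₁ _
    rw [Finset.inter_comm] at s2
    have hxy : x = y := by
      have : ∑ a ∈ Q₁ \ Q₂, a = ∑ a ∈ Q₂ \ Q₁, a := by
        rw [hs₁] at s1; rw [hs₂] at s2
        exact add_left_cancel (s1.trans s2.symm)
      rwa [hx, hy, Finset.sum_singleton, Finset.sum_singleton] at this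
    have hxm : x ∈ Q₁ \ Q₂ := hx ▸ Finset.mem_singleton_self x
    have hym : y ∈ Q₂ \ Q₁ := hy ▸ Finset.mem_singleton_self y
    rw [Finset.mem_sdiff] at hxm hym
    exact hxm.2 (hxy ▸ hym.1)
  have h0' : (Q₁ ∩ Q₂).card ≠ 0 := by
    intro h
    have hdisj : Disjoint Q₁ Q₂ := by
      rw [Finset.disjoint_iff_inter_eq_empty]
      exact Finset.card_eq_zero.mp h
    have hcu : (Q₁ ∪ Q₂).card = 8 := by
      rw [Finset.card_union_of_disjoint hdisj, hc₁, hc₂]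
    have hsub : Q₁ ∪ Q₂ ⊆ A := Finset.union_subset hQ₁ hQ₂
    have hsd : ∑ a ∈ A \ (Q₁ ∪ Q₂), a + ∑ a ∈ Q₁ ∪ Q₂, a = ∑ a ∈ A, a :=
      Finset.sum_sdiff hsub
    have hsu : ∑ a ∈ Q₁ ∪ Q₂, a = 0 := by
      rw [Finset.sum_union hdisj, hs₁, hs₂, add_zero]
    have hcd : (A \ (Q₁ ∪ Q₂)).card = 1 := by
      rw [Finset.card_sdiff_of_subset hsub, hcard, hcu]
    obtain ⟨z, hz⟩ := Finset.card_eq_one.mp hcd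
    have hz0 : z = 0 := by
      rw [hz, Finset.sum_singleton, hsu, add_zero, hsum] at hsd
      exact hsd
    have hzm : z ∈ A \ (Q₁ ∪ Q₂) := hz ▸ Finset.mem_singleton_self z
    exact h0 (hz0 ▸ (Finset.mem_sdiff.mp hzm).1)
  omega
end

section
/- Let G = Sym(3) be the symmetric group on 3 letters and A = G \ {identity}. Then for every ordering (a_1, ..., a_5) of the elements of A, the partial products s_j = a_1 · ... · a_j (1 ≤ j ≤ 5) are not all distinct and nonidentity; i.e., there is no ordering of A with all partial products pairwise distinct and different from the identity. -/
set_option maxRecDepth 10000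

def L0 : List (Equiv.Perm (Fin 3)) :=
  [Equiv.swap 0 1, Equiv.swap 0 2, Equiv.swap 1 2, finRotate 3, (finRotate 3)⁻¹]

theorem stmt_14 (l : List (Equiv.Perm (Fin 3))) (hnd : l.Nodup)
    (hl : l.toFinset = Finset.univ \ {1}) :
    ¬ ((∀ i j : Fin l.length,
          (l.take (i.1 + 1)).prod = (l.take (j.1 + 1)).prod → i = j) ∧
       (∀ i : Fin l.length, (l.take (i.1 + 1)).prod ≠ 1)) := by
  have hnd0 : L0.Nodup := by decide
  have hsub : L0.toFinset ⊆ Finset.univ \ {1} := by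
    intro x hx
    simp only [Finset.mem_sdiff, Finset.mem_univ, true_and, Finset.mem_singleton]
    fin_cases hx <;> decide
  have hcard : (Finset.univ \ {1} : Finset (Equiv.Perm (Fin 3))).card = 5 := by
    rw [Finset.card_sdiff_of_subset (by simp)]
    simp [Fintype.card_perm, Nat.factorial]
  have heq : (Finset.univ \ {1} : Finset (Equiv.Perm (Fin 3))) = L0.toFinset := by
    refine (Finset.eq_of_subset_of_card_le hsub ?_).symm
    rw [hcard, List.toFinset_card_of_nodup hnd0]; rfl
  have hp : l.Perm L0 :=
    List.perm_of_nodup_nodup_toFinset_eq hnd hnd0 (by rw [hl, heq])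
  have hmem : l ∈ L0.permutations' := List.mem_permutations'.2 hp
  have key : ∀ m ∈ L0.permutations',
      ¬ ((∀ i j : Fin m.length,
          (m.take (i.1 + 1)).prod = (m.take (j.1 + 1)).prod → i = j) ∧
       (∀ i : Fin m.length, (m.take (i.1 + 1)).prod ≠ 1)) := by decide
  exact key l hmem
end

section
/- Let v ≥ 1 and let L = {a_1^{m_1}, ..., a_t^{m_t}} be a multiset of k elements from {1, ..., ⌊v/2⌋} with d = gcd(v, a_1, ..., a_t) > 1. Then there exists a k-cycle C in the complete graph K_v on vertex set Z_v with edge-length multiset ℓ(C) = L if and only if there exists a k-cycle C' in K_{v/d} on vertex set Z_{v/d} with edge-length multiset {(a_1/d)^{m_1}, ..., (a_t/d)^{m_t}}. -/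
/-- The multiset of edge-lengths of the cycle through the vertices
`c 0, c 1, ..., c (k-1)` of the complete graph on `ZMod v`, where the length of the
edge `[x, y]` is `min (|x - y|) (v - |x - y|)`, i.e. `min (x-y).val (y-x).val`. -/
def cycLens (v : ℕ) {k : ℕ} (c : Fin k → ZMod v) : Multiset ℕ :=
  ↑(List.ofFn fun i : Fin k =>
      min ((c ⟨(i.1 + 1) % k, Nat.mod_lt _ i.pos⟩ - c i).val)
          ((c i - c ⟨(i.1 + 1) % k, Nat.mod_lt _ i.pos⟩).val))

namespace Stmt15Aux

/-- The embedding `ZMod e → ZMod v` (for `v = d * e`) given by multiplication by `d`. -/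
def phi (v d : ℕ) {e : ℕ} (z : ZMod e) : ZMod v := ((d * z.val : ℕ) : ZMod v)

variable {v d e : ℕ}

lemma phi_val (hv : v = d * e) (hd0 : 0 < d) (he0 : 0 < e) (z : ZMod e) :
    (phi v d z).val = d * z.val := by
  haveI : NeZero e := ⟨he0.ne'⟩
  haveI : NeZero v := ⟨by rw [hv]; positivity⟩
  apply ZMod.val_cast_of_lt
  have hz := ZMod.val_lt z
  calc d * z.val < d * e := by gcongr
    _ = v := hv.symm

lemma phi_inj (hv : v = d * e) (hd0 : 0 < d) (he0 : 0 < e) :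
    Function.Injective (phi v d (e := e)) := by
  intro x y h
  haveI : NeZero e := ⟨he0.ne'⟩
  have := congrArg ZMod.val h
  rw [phi_val hv hd0 he0, phi_val hv hd0 he0] at this
  have : x.val = y.val := Nat.eq_of_mul_eq_mul_left hd0 this
  exact ZMod.val_injective _ this

lemma phi_sub (hv : v = d * e) (he0 : 0 < e) (x y : ZMod e) :
    phi v d x - phi v d y = phi v d (x - y) := by
  haveI : NeZero e := ⟨he0.ne'⟩
  rw [sub_eq_iff_eq_add]
  show ((d * x.val : ℕ) : ZMod v) = ((d * (x - y).val : ℕ) : ZMod v) + ((d * y.val : ℕ) : ZMod v)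
  rw [← Nat.cast_add, ← Nat.mul_add]
  have hx : x = (x - y) + y := by ring
  have hval : x.val = ((x - y).val + y.val) % e := by
    conv_lhs => rw [hx]
    exact ZMod.val_add _ _
  rw [hval]
  have hmod : d * (((x - y).val + y.val) % e) ≡ d * ((x - y).val + y.val) [MOD v] := by
    rw [hv]; exact (Nat.mod_modEq _ e).mul_left' d
  exact (ZMod.natCast_eq_natCast_iff _ _ _).mpr hmod

lemma phi_len (hv : v = d * e) (hd0 : 0 < d) (he0 : 0 < e) (x y : ZMod e) :
    min ((phi v d y - phi v d x).val) ((phi v d x - phi v d y).val)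
      = d * min ((y - x).val) ((x - y).val) := by
  rw [phi_sub hv he0, phi_sub hv he0, phi_val hv hd0 he0, phi_val hv hd0 he0]
  rcases le_total ((y - x).val) ((x - y).val) with h | h
  · rw [min_eq_left h, min_eq_left (Nat.mul_le_mul_left d h)]
  · rw [min_eq_right h, min_eq_right (Nat.mul_le_mul_left d h)]

lemma phi_surj (hv : v = d * e) (hd0 : 0 < d) (he0 : 0 < e) {w : ZMod v}
    (hw : d ∣ w.val) : ∃ z : ZMod e, phi v d z = w := by
  haveI : NeZero e := ⟨he0.ne'⟩
  haveI : NeZero v := ⟨by rw [hv]; positivity⟩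
  obtain ⟨q, hq⟩ := hw
  have hqe : q < e := by
    have hlt := ZMod.val_lt w
    rw [hq, hv] at hlt
    exact lt_of_mul_lt_mul_left hlt (Nat.zero_le d)
  refine ⟨(q : ZMod e), ?_⟩
  unfold phi
  rw [ZMod.val_cast_of_lt hqe, ← hq]
  exact ZMod.natCast_rightInverse w

lemma cycLens_phi (hv : v = d * e) (hd0 : 0 < d) (he0 : 0 < e) {k : ℕ}
    (c' : Fin k → ZMod e) :
    cycLens v (fun i => phi v d (c' i)) = (cycLens e c').map (d * ·) := by
  unfold cycLens
  rw [Multiset.map_coe, List.map_ofFn]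
  congr 1
  congr 1
  funext i
  exact phi_len hv hd0 he0 _ _

lemma dvd_val_of_dvd_min (hv0 : 0 < v) (hdv : d ∣ v) (x : ZMod v)
    (h : d ∣ min x.val (-x).val) : d ∣ x.val := by
  haveI : NeZero v := ⟨hv0.ne'⟩
  have hsum : v ∣ x.val + (-x).val := by
    have h0 : (x + -x).val = (x.val + (-x).val) % v := ZMod.val_add x (-x)
    simp only [add_neg_cancel, ZMod.val_zero] at h0
    exact Nat.dvd_of_mod_eq_zero h0.symm
  have hds : d ∣ x.val + (-x).val := hdv.trans hsum
  rcases min_cases x.val (-x).val with ⟨hm, _⟩ | ⟨hm, _⟩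
  · rwa [hm] at h
  · rw [hm] at h
    have := Nat.dvd_sub hds h
    simpa using this

lemma dvd_val_add (hv0 : 0 < v) (hdv : d ∣ v) {x y : ZMod v}
    (hx : d ∣ x.val) (hy : d ∣ y.val) : d ∣ (x + y).val := by
  haveI : NeZero v := ⟨hv0.ne'⟩
  rw [ZMod.val_add]
  exact (Nat.dvd_mod_iff hdv).mpr (hx.add hy)

lemma foldr_gcd_dvd {x : ℕ} : ∀ (l : List ℕ), x ∈ l → l.foldr Nat.gcd 0 ∣ x := by
  intro l
  induction l with
  | nil => intro h; simp at h
  | cons b l ih =>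
    intro h
    rcases List.mem_cons.mp h with rfl | h
    · exact Nat.gcd_dvd_left _ _
    · exact (Nat.gcd_dvd_right _ _).trans (ih h)

lemma cycLens_translate (v : ℕ) {k : ℕ} (c : Fin k → ZMod v) (w : ZMod v) :
    cycLens v (fun i => c i - w) = cycLens v c := by
  unfold cycLens
  congr 1
  congr 1
  funext i
  simp only [sub_sub_sub_cancel_right]

end Stmt15Aux

open Stmt15Aux in
theorem stmt_15 (v t : ℕ) (hv : 1 ≤ v) (a m : Fin t → ℕ)
    (ha : ∀ i, 1 ≤ a i ∧ a i ≤ v / 2)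
    (d : ℕ) (hd : d = Nat.gcd v ((List.ofFn a).foldr Nat.gcd 0)) (hd1 : 1 < d)
    (L : Multiset ℕ) (hL : L = ∑ i, Multiset.replicate (m i) (a i))
    (k : ℕ) (hk : k = Multiset.card L) :
    (∃ c : Fin k → ZMod v, Function.Injective c ∧ cycLens v c = L) ↔
    (∃ c' : Fin k → ZMod (v / d), Function.Injective c' ∧
        cycLens (v / d) c' = L.map (· / d)) := by
  have hd0 : 0 < d := by omega
  have hdv : d ∣ v := hd ▸ Nat.gcd_dvd_left _ _
  have hve : v = d * (v / d) := (Nat.mul_div_cancel' hdv).symm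
  have he0 : 0 < v / d := Nat.div_pos (Nat.le_of_dvd (by omega) hdv) hd0
  have haL : ∀ x ∈ L, d ∣ x := by
    intro x hx
    rw [hL, Multiset.mem_sum] at hx
    obtain ⟨i, _, hi⟩ := hx
    have hxa : x = a i := (Multiset.eq_of_mem_replicate hi)
    subst hxa
    have h1 : d ∣ (List.ofFn a).foldr Nat.gcd 0 := hd ▸ Nat.gcd_dvd_right _ _
    exact h1.trans (foldr_gcd_dvd _ (List.mem_ofFn.mpr ⟨i, rfl⟩))
  rcases Nat.eq_zero_or_pos k with hk0 | hk0
  · subst hk0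
    have hL0 : L = 0 := Multiset.card_eq_zero.mp hk.symm
    subst hL0
    constructor
    · rintro -
      exact ⟨Fin.elim0, fun i => i.elim0, by simp [cycLens, List.ofFn_zero]⟩
    · rintro -
      exact ⟨Fin.elim0, fun i => i.elim0, by simp [cycLens, List.ofFn_zero]⟩
  constructor
  · rintro ⟨c, hcinj, hclen⟩
    have hdiffc : ∀ i : Fin k,
        d ∣ (c ⟨(i.1 + 1) % k, Nat.mod_lt _ i.pos⟩ - c i).val := by
      intro i
      have hmem : min ((c ⟨(i.1 + 1) % k, Nat.mod_lt _ i.pos⟩ - c i).val)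
          ((c i - c ⟨(i.1 + 1) % k, Nat.mod_lt _ i.pos⟩).val) ∈ L := by
        rw [← hclen]
        unfold cycLens
        exact Multiset.mem_coe.mpr (List.mem_ofFn.mpr ⟨i, rfl⟩)
      have hdm := haL _ hmem
      apply dvd_val_of_dvd_min (by omega) hdv
      rwa [neg_sub]
    have key : ∀ n, (hn : n < k) → d ∣ (c ⟨n, hn⟩ - c ⟨0, hk0⟩).val := by
      intro n
      induction n with
      | zero => intro hn; simp
      | succ n ih =>
        intro hn
        have hn' : n < k := Nat.lt_of_succ_lt hn
        have h1 := hdiffc ⟨n, hn'⟩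
        simp only [Nat.mod_eq_of_lt hn] at h1
        have h2 := dvd_val_add (d := d) (by omega) hdv h1 (ih hn')
        rwa [sub_add_sub_cancel] at h2
    have hchoice : ∀ i : Fin k, ∃ z : ZMod (v / d), phi v d z = c i - c ⟨0, hk0⟩ :=
      fun i => phi_surj hve hd0 he0 (key i.1 i.2)
    choose c' hc' using hchoice
    have hphic : (fun i => phi v d (c' i)) = fun i => c i - c ⟨0, hk0⟩ := funext hc'
    refine ⟨c', ?_, ?_⟩
    · intro i j hij
      apply hcinj
      have h := congrArg (phi v d) hij
      rw [hc', hc'] at h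
      exact sub_left_inj.mp h
    · have h5 := cycLens_phi hve hd0 he0 c'
      rw [hphic, cycLens_translate, hclen] at h5
      rw [h5, Multiset.map_map]
      symm
      calc (cycLens (v / d) c').map ((· / d) ∘ (d * ·))
          = (cycLens (v / d) c').map id := by
            apply Multiset.map_congr rfl
            intro x _
            simp [Nat.mul_div_cancel_left x hd0]
        _ = cycLens (v / d) c' := Multiset.map_id _
  · rintro ⟨c', hinj, hlen⟩
    refine ⟨fun i => phi v d (c' i), ?_, ?_⟩
    · exact (phi_inj hve hd0 he0).comp hinj
    · rw [cycLens_phi hve hd0 he0, hlen, Multiset.map_map]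
      calc L.map ((d * ·) ∘ (· / d)) = L.map id := by
            apply Multiset.map_congr rfl
            intro x hx
            simp [Nat.mul_div_cancel' (haL x hx)]
        _ = L := Multiset.map_id _
end

section
/- Let D be a partition of a subset A of Z_v \ {0}, where v is odd, |A| = (v-1)/2, A contains no 2-subset {x,-x}, each part of D has size k, and each part sums to 0 in Z_v (a Heffter system D(v,k)). Suppose each part admits a simple ordering. Then the multiset union over all parts P, with simple ordering (a_1,...,a_k), of the difference lists Δ(C_P) of the cycles C_P = (a_1, a_1+a_2, ..., a_1+...+a_k) equals Z_v \ {0}. -/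
def deltaList {v : ℕ} (cs : List (ZMod v)) : Multiset (ZMod v) :=
  ↑(List.ofFn fun h : Fin cs.length =>
      cs.get ⟨(h.1 + 1) % cs.length, Nat.mod_lt _ h.pos⟩ - cs.get h) +
  ↑(List.ofFn fun h : Fin cs.length =>
      -(cs.get ⟨(h.1 + 1) % cs.length, Nat.mod_lt _ h.pos⟩ - cs.get h))

lemma deltaList_partialSums {v : ℕ} (l : List (ZMod v)) (hl : l.sum = 0) :
    deltaList (List.ofFn fun h : Fin l.length => (l.take (h.1 + 1)).sum) =
      ↑l + ↑(l.map (fun x => -x)) := by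
  have h1 : (List.ofFn fun h : Fin (List.ofFn fun h : Fin l.length =>
        (l.take (h.1 + 1)).sum).length =>
      (List.ofFn fun h : Fin l.length => (l.take (h.1 + 1)).sum).get
          ⟨(h.1 + 1) % (List.ofFn fun h : Fin l.length => (l.take (h.1 + 1)).sum).length,
            Nat.mod_lt _ h.pos⟩ -
        (List.ofFn fun h : Fin l.length => (l.take (h.1 + 1)).sum).get h)
      = l.rotate 1 := by
    apply List.ext_get
    · simp
    · intro i hi1 hi2
      have hn : i < l.length := by simpa using hi2
      rw [List.get_rotate]
      simp only [List.get_ofFn, List.length_ofFn, Fin.cast]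
      rcases Nat.lt_or_ge (i + 1) l.length with hlt | hge
      · simp only [Nat.mod_eq_of_lt hlt]
        rw [List.sum_take_succ l (i+1) hlt]
        simp
      · have heq : i + 1 = l.length := by omega
        have hmod : (i + 1) % l.length = 0 := by rw [heq, Nat.mod_self]
        simp only [hmod]
        have h2 : (l.take (i+1)).sum = 0 := by
          rw [heq, List.take_length, hl]
        rw [h2, List.sum_take_succ l 0 (by omega)]
        simp
  unfold deltaList
  rw [h1, show (List.ofFn fun h : Fin (List.ofFn fun h : Fin l.length =>
        (l.take (h.1 + 1)).sum).length =>
      -((List.ofFn fun h : Fin l.length => (l.take (h.1 + 1)).sum).get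
          ⟨(h.1 + 1) % (List.ofFn fun h : Fin l.length => (l.take (h.1 + 1)).sum).length,
            Nat.mod_lt _ h.pos⟩ -
        (List.ofFn fun h : Fin l.length => (l.take (h.1 + 1)).sum).get h))
      = (l.rotate 1).map (fun x => -x) from by rw [← h1, List.map_ofFn]; rfl]
  rw [Multiset.coe_eq_coe.mpr (l.rotate_perm 1),
    Multiset.coe_eq_coe.mpr ((l.rotate_perm 1).map (fun x => -x))]

theorem stmt_19 (v k : ℕ) [NeZero v] (hodd : Odd v)
    (A : Finset (ZMod v)) (h0 : (0 : ZMod v) ∉ A)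
    (hpair : ∀ x ∈ A, -x ∈ A → x = -x)
    (hAcard : A.card = (v - 1) / 2)
    (D : Finset (Finset (ZMod v)))
    (hparts : ∀ P ∈ D, P ⊆ A)
    (hpartition : ∀ x ∈ A, ∃! P, P ∈ D ∧ x ∈ P)
    (hk : ∀ P ∈ D, P.card = k)
    (hzero : ∀ P ∈ D, ∑ a ∈ P, a = 0)
    (ω : Finset (ZMod v) → List (ZMod v))
    (hω : ∀ P ∈ D, (ω P).Nodup ∧ (ω P).toFinset = P ∧
        ∀ i j : Fin (ω P).length,
          ((ω P).take (i.1 + 1)).sum = ((ω P).take (j.1 + 1)).sum → i = j) :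
    ∑ P ∈ D,
        deltaList (List.ofFn fun h : Fin (ω P).length => ((ω P).take (h.1 + 1)).sum)
      = (Finset.univ \ {0} : Finset (ZMod v)).val := by
  classical
  have hcoe : ∀ P ∈ D, (↑(ω P) : Multiset (ZMod v)) = P.val := by
    intro P hP
    obtain ⟨hnd, htf, -⟩ := hω P hP
    conv_rhs => rw [← htf]
    rw [List.toFinset_val, List.dedup_eq_self.mpr hnd]
  have hsum0 : ∀ P ∈ D, (ω P).sum = 0 := by
    intro P hP
    have h1 : ((ω P : Multiset (ZMod v))).sum = 0 := by
      rw [hcoe P hP]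
      have h2 := hzero P hP
      rwa [Finset.sum_eq_multiset_sum, Multiset.map_id'] at h2
    simpa using h1
  have step : ∀ P ∈ D,
      deltaList (List.ofFn fun h : Fin (ω P).length => ((ω P).take (h.1 + 1)).sum)
        = P.val + P.val.map (fun x => -x) := by
    intro P hP
    rw [deltaList_partialSums (ω P) (hsum0 P hP)]
    rw [← hcoe P hP]
    simp
  rw [Finset.sum_congr rfl step, Finset.sum_add_distrib]
  have hsumval : ∑ P ∈ D, P.val = A.val := by
    ext x
    rw [Multiset.count_sum']
    by_cases hx : x ∈ A
    · obtain ⟨P₀, ⟨hPD, hxP⟩, huniq⟩ := hpartition x hx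
      rw [Finset.sum_eq_single_of_mem P₀ hPD]
      · rw [Multiset.count_eq_of_nodup P₀.nodup, if_pos (Finset.mem_def.mp hxP),
          Multiset.count_eq_of_nodup A.nodup, if_pos (Finset.mem_def.mp hx)]
      · intro Q hQ hne
        rw [Multiset.count_eq_of_nodup Q.nodup, if_neg]
        intro hxQ
        exact hne (huniq Q ⟨hQ, hxQ⟩)
    · rw [Multiset.count_eq_of_nodup A.nodup, if_neg (fun h => hx (Finset.mem_def.mpr h))]
      apply Finset.sum_eq_zero
      intro Q hQ
      rw [Multiset.count_eq_of_nodup Q.nodup, if_neg (fun (h : x ∈ Q.val) => hx (hparts Q hQ h))]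
  have hmapsum : ∑ P ∈ D, P.val.map (fun x : ZMod v => -x)
      = A.val.map (fun x => -x) := by
    rw [← hsumval]
    exact (map_sum (Multiset.mapAddMonoidHom _) _ _).symm
  rw [hsumval, hmapsum]
  set e : ZMod v ↪ ZMod v := ⟨fun x => -x, neg_injective⟩ with he
  have hdisj : Disjoint A (A.map e) := by
    rw [Finset.disjoint_left]
    intro x hx hx'
    obtain ⟨y, hy, hyx⟩ := Finset.mem_map.mp hx'
    have hyx' : -y = x := hyx
    have hnegy : -y ∈ A := hyx' ▸ hx
    have h2 : y = -y := hpair y hy hnegy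
    have h2u : IsUnit (2 : ZMod v) := by
      have := (ZMod.isUnit_iff_coprime 2 v).mpr (Odd.coprime_two_left hodd)
      simpa using this
    have hy2 : (2 : ZMod v) * y = 0 := by linear_combination h2
    have hy0 : y = 0 := (IsUnit.mul_right_eq_zero h2u).mp hy2
    rw [hy0] at hy; exact h0 hy
  have hsub : A ∪ A.map e ⊆ Finset.univ \ {0} := by
    intro x hx
    simp only [Finset.mem_sdiff, Finset.mem_univ, true_and, Finset.mem_singleton]
    rcases Finset.mem_union.mp hx with h | h
    · rintro rfl; exact h0 h
    · obtain ⟨y, hy, rfl⟩ := Finset.mem_map.mp h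
      intro h'
      have hy0 : y = 0 := by
        have : -y = 0 := h'
        simpa using this
      rw [hy0] at hy; exact h0 hy
  have hcardU : (Finset.univ \ {0} : Finset (ZMod v)).card = v - 1 := by
    rw [Finset.card_sdiff_of_subset (by simp)]
    simp [ZMod.card]
  have hcards : (A ∪ A.map e).card = v - 1 := by
    rw [Finset.card_union_of_disjoint hdisj, Finset.card_map, hAcard]
    obtain ⟨m, hm⟩ := hodd
    omega
  have hEq : A ∪ A.map e = Finset.univ \ {0} :=
    Finset.eq_of_subset_of_card_le hsub (by rw [hcardU, hcards])
  rw [← hEq, ← Finset.disjUnion_eq_union A (A.map e) hdisj]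
  rfl
end
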